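/- arXiv:2409.05632 — 3 statements merged into one kernel-verified Lean document; each statement's English description precedes it below -/
import Mathlib

section
/- Suppose the conditional survival function follows a Cox proportional hazards model: S(t|X) = exp(−Λ₀(t) e^{θᵀX}) with Λ₀(t) > 0. Then with link g(x) = log(−log(x)), the assumption-lean coefficient β_t^{AL} = var(X)^{-1} cov(g(S(t|X)), X) equals θ. -/
/-!
The complementary log-log link linearises the Cox model: `g (S ω) = log Λ₀ + θᵀ X ω`.
By bilinearity of covariance, `cov (g ∘ S, X) = var(X) θ`, and inverting `var(X)` returns `θ`.
-/

open MeasureTheory Matrix ProbabilityTheory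

theorem Real.log_neg_log_exp_neg_mul_exp {a : ℝ} (ha : 0 < a) (s : ℝ) :
    Real.log (-Real.log (Real.exp (-(a * Real.exp s)))) = Real.log a + s := by
  rw [Real.log_exp, neg_neg, Real.log_mul ha.ne' (Real.exp_ne_zero s), Real.log_exp]

theorem MeasureTheory.memLp_two_of_integrable_mul_self {Ω : Type*} [MeasurableSpace Ω]
    {μ : Measure Ω} {f : Ω → ℝ} (hf : Integrable f μ) (hff : Integrable (fun ω => f ω * f ω) μ) :
    MemLp f 2 μ :=
  (memLp_two_iff_integrable_sq hf.aestronglyMeasurable).2 (by simpa only [sq] using hff)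

namespace ProbabilityTheory

variable {Ω ι : Type*} [MeasurableSpace Ω] {μ : Measure Ω} [Fintype ι]

noncomputable def covarianceMatrix (X : ι → Ω → ℝ) (μ : Measure Ω) : Matrix ι ι ℝ :=
  Matrix.of fun i j => cov[X i, X j; μ]

variable [IsProbabilityMeasure μ] {X : ι → Ω → ℝ}

theorem covariance_const_add_sum_mul_left (hX : ∀ j, MemLp (X j) 2 μ) {Y : Ω → ℝ}
    (hY : MemLp Y 2 μ) (a : ℝ) (θ : ι → ℝ) :
    cov[fun ω => a + ∑ j, θ j * X j ω, Y; μ] = ∑ j, θ j * cov[X j, Y; μ] := by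
  have hXint : ∀ j, Integrable (X j) μ := fun j => (hX j).integrable one_le_two
  rw [covariance_const_add_left (integrable_finsetSum _ fun j _ => (hXint j).const_mul _),
    covariance_fun_sum_left (X := fun j ω => θ j * X j ω) (fun j => (hX j).const_mul _) hY]
  simp only [covariance_const_mul_left]

theorem covarianceMatrix_mulVec (hX : ∀ j, MemLp (X j) 2 μ) (a : ℝ) (θ : ι → ℝ) :
    covarianceMatrix X μ *ᵥ θ = fun i => cov[fun ω => a + ∑ j, θ j * X j ω, X i; μ] := by
  funext i
  rw [covariance_const_add_sum_mul_left hX (hX i)]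
  simp only [covarianceMatrix, mulVec, dotProduct, of_apply, covariance_comm (X i), mul_comm]

theorem covarianceMatrix_inv_mulVec_covariance_const_add_sum_mul [DecidableEq ι]
    (hX : ∀ j, MemLp (X j) 2 μ) (hdet : IsUnit (covarianceMatrix X μ).det) (a : ℝ) (θ : ι → ℝ) :
    (covarianceMatrix X μ)⁻¹ *ᵥ (fun i => cov[fun ω => a + ∑ j, θ j * X j ω, X i; μ]) = θ := by
  rw [← covarianceMatrix_mulVec hX a θ, mulVec_mulVec, nonsing_inv_mul _ hdet, one_mulVec]

end ProbabilityTheory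

theorem stmt_9_general {Ω : Type*} [MeasurableSpace Ω] (μ : Measure Ω) [IsProbabilityMeasure μ]
    {d : ℕ} (X : Ω → Fin d → ℝ) (θ : Fin d → ℝ) (Λ0 : ℝ) (hΛ0 : 0 < Λ0)
    (hXint : ∀ i, Integrable (fun ω => X ω i) μ)
    (hXXint : ∀ i j, Integrable (fun ω => X ω i * X ω j) μ)
    (S : Ω → ℝ) (hScox : ∀ ω, S ω = Real.exp (-(Λ0 * Real.exp (∑ i, θ i * X ω i))))
    (g : ℝ → ℝ) (hg : ∀ x, g x = Real.log (-Real.log x))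
    (μv : Fin d → ℝ) (hμv : ∀ i, μv i = ∫ ω, X ω i ∂μ)
    (Sig : Matrix (Fin d) (Fin d) ℝ)
    (hSig : ∀ i j, Sig i j = ∫ ω, (X ω i - μv i) * (X ω j - μv j) ∂μ)
    (hSiginv : IsUnit Sig.det)
    (c : Fin d → ℝ)
    (hc : ∀ i, c i = ∫ ω, (g (S ω) - ∫ ω', g (S ω') ∂μ) * (X ω i - μv i) ∂μ) :
    Sig⁻¹ *ᵥ c = θ := by
  have hgS : (fun ω => g (S ω)) = fun ω => Real.log Λ0 + ∑ i, θ i * X ω i := by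
    funext ω
    rw [hg, hScox, Real.log_neg_log_exp_neg_mul_exp hΛ0]
  have hSig_cov : Sig = covarianceMatrix (fun i ω => X ω i) μ := by
    ext i j
    rw [hSig, hμv, hμv]
    rfl
  have hc_cov : c = fun i => cov[fun ω => Real.log Λ0 + ∑ j, θ j * X ω j, fun ω => X ω i; μ] := by
    funext i
    rw [hc, hμv, ← hgS]
    rfl
  subst hSig_cov hc_cov
  exact covarianceMatrix_inv_mulVec_covariance_const_add_sum_mul
    (fun i => memLp_two_of_integrable_mul_self (hXint i) (hXXint i i)) hSiginv _ θ

/-- Under a Cox model S(t|X) = exp(−Λ₀(t) e^{θᵀX}) with Λ₀(t) > 0 and link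
g(x) = log(−log(x)), the assumption-lean coefficient
β_t^{AL} = var(X)⁻¹ cov(g(S(t|X)), X) equals θ. -/
theorem stmt_9 {Ω : Type*} [MeasurableSpace Ω] (μ : Measure Ω) [IsProbabilityMeasure μ]
    {d : ℕ} (X : Ω → Fin d → ℝ) (θ : Fin d → ℝ) (Λ0 : ℝ) (hΛ0 : 0 < Λ0)
    (hXm : ∀ i, Measurable fun ω => X ω i)
    (hXint : ∀ i, Integrable (fun ω => X ω i) μ)
    (hXXint : ∀ i j, Integrable (fun ω => X ω i * X ω j) μ)
    (S : Ω → ℝ) (hScox : ∀ ω, S ω = Real.exp (-(Λ0 * Real.exp (∑ i, θ i * X ω i))))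
    (g : ℝ → ℝ) (hg : ∀ x, g x = Real.log (-Real.log x))
    (μv : Fin d → ℝ) (hμv : ∀ i, μv i = ∫ ω, X ω i ∂μ)
    (Sig : Matrix (Fin d) (Fin d) ℝ)
    (hSig : ∀ i j, Sig i j = ∫ ω, (X ω i - μv i) * (X ω j - μv j) ∂μ)
    (hSiginv : IsUnit Sig.det)
    (c : Fin d → ℝ)
    (hgint : Integrable (fun ω => g (S ω)) μ)
    (hc : ∀ i, c i = ∫ ω, (g (S ω) - ∫ ω', g (S ω') ∂μ) * (X ω i - μv i) ∂μ) :
    Sig⁻¹ *ᵥ c = θ :=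
  stmt_9_general μ X θ Λ0 hΛ0 hXint hXXint S hScox g hg μv hμv Sig hSig hSiginv c hc
end

section
/- Under the conditional independence of T and C given X, and positivity K_C(t|X) = P(C > t | X) > 0 for t ≤ τ, the inverse-probability-of-censoring-weighting identity holds: E[ Δ I(T̃ ≤ τ) φ(T, X) / K_C(T̃ | X) | X ] = E[ I(T ≤ τ) φ(T, X) | X ] for any bounded measurable function φ, where T̃ = min(T, C) and Δ = I(T ≤ C). -/
/-!
By independence, the expectation of a function of `(T, C)` may be computed by integrating out
`C` with `T = t` frozen. For fixed `t ≤ τ`, the weighted integrand is `φ t / K t` on the event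
`{t ≤ C}`, whose probability `P(C ≥ t)` equals `P(C > t) = K t` because `C` has no atoms;
so the weight cancels and only `I(t ≤ τ) φ t` remains.
-/

open MeasureTheory ProbabilityTheory

namespace MeasureTheory

variable {Ω : Type*} [MeasurableSpace Ω] {μ : Measure Ω} {C : Ω → ℝ}

theorem antitone_measureReal_lt [IsFiniteMeasure μ] : Antitone fun t ↦ μ.real {ω | t < C ω} :=
  fun _ _ hab ↦ measureReal_mono fun _ hω ↦ hab.trans_lt hω

theorem measureReal_le_eq_measureReal_lt {t : ℝ} (ht : μ {ω | C ω = t} = 0) :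
    μ.real {ω | t ≤ C ω} = μ.real {ω | t < C ω} := by
  have hsplit : {ω | t ≤ C ω} = {ω | t < C ω} ∪ {ω | C ω = t} := by
    ext ω
    simp [le_iff_lt_or_eq, eq_comm]
  rw [hsplit, measureReal_def, measureReal_def,
    measure_congr (union_ae_eq_left_of_ae_eq_empty (ae_eq_empty.mpr ht))]

end MeasureTheory

namespace ProbabilityTheory

variable {Ω : Type*} [MeasurableSpace Ω] {μ : Measure Ω} [IsFiniteMeasure μ]

theorem IndepFun.integral_comp_prod_eq_integral_integral {α β E : Type*} [MeasurableSpace α]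
    [MeasurableSpace β] [NormedAddCommGroup E] [NormedSpace ℝ E] {X : Ω → α} {Y : Ω → β}
    (hX : Measurable X) (hY : Measurable Y) (hXY : IndepFun X Y μ) {f : α × β → E}
    (hf_meas : StronglyMeasurable f) (hf_int : Integrable f (μ.map fun ω ↦ (X ω, Y ω))) :
    ∫ ω, f (X ω, Y ω) ∂μ = ∫ ω, ∫ ω', f (X ω, Y ω') ∂μ ∂μ := by
  have hmap : μ.map (fun ω ↦ (X ω, Y ω)) = (μ.map X).prod (μ.map Y) :=
    (indepFun_iff_map_prod_eq_prod_map_map hX.aemeasurable hY.aemeasurable).mp hXY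
  rw [hmap] at hf_int
  calc ∫ ω, f (X ω, Y ω) ∂μ = ∫ p, f p ∂(μ.map X).prod (μ.map Y) := by
        rw [← hmap, integral_map (hX.prodMk hY).aemeasurable hf_meas.aestronglyMeasurable]
    _ = ∫ x, ∫ y, f (x, y) ∂μ.map Y ∂μ.map X := integral_prod f hf_int
    _ = ∫ ω, ∫ ω', f (X ω, Y ω') ∂μ ∂μ := by
        rw [integral_map hX.aemeasurable hf_int.integral_prod_left.aestronglyMeasurable]
        congr with ω
        exact integral_map hY.aemeasurable
          (hf_meas.comp_measurable measurable_prodMk_left).aestronglyMeasurable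

theorem IndepFun.integral_ite_le_eq_integral_mul_measureReal {T C : Ω → ℝ} (hT : Measurable T)
    (hC : Measurable C) (hTC : IndepFun T C μ) {g : ℝ → ℝ} (hg : Measurable g) {M : ℝ}
    (hg_bdd : ∀ t, |g t| ≤ M) :
    ∫ ω, (if T ω ≤ C ω then g (T ω) else 0) ∂μ
      = ∫ ω, g (T ω) * μ.real {ω' | T ω ≤ C ω'} ∂μ := by
  have hf_meas : Measurable fun p : ℝ × ℝ ↦ if p.1 ≤ p.2 then g p.1 else 0 :=
    (hg.comp measurable_fst).ite (measurableSet_le measurable_fst measurable_snd) measurable_const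
  have hf_int : Integrable (fun p : ℝ × ℝ ↦ if p.1 ≤ p.2 then g p.1 else 0)
      (μ.map fun ω ↦ (T ω, C ω)) := by
    refine (integrable_const M).mono' hf_meas.aestronglyMeasurable (.of_forall fun p ↦ ?_)
    split_ifs
    · exact hg_bdd _
    · simpa using (abs_nonneg _).trans (hg_bdd 0)
  rw [hTC.integral_comp_prod_eq_integral_integral hT hC hf_meas.stronglyMeasurable hf_int]
  congr with ω
  have hs : MeasurableSet {ω' | T ω ≤ C ω'} := measurableSet_le measurable_const hC
  rw [mul_comm, ← smul_eq_mul, ← integral_indicator_const (g (T ω)) hs]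
  rfl

end ProbabilityTheory

theorem abs_ite_div_le {φ K : ℝ → ℝ} {τ ε B : ℝ} (hε : 0 < ε)
    (hKε : ∀ t ≤ τ, ε < K t) (hφB : ∀ x, |φ x| ≤ B) (t : ℝ) :
    |if t ≤ τ then φ t / K t else 0| ≤ B / ε := by
  have hB : 0 ≤ B := (abs_nonneg _).trans (hφB 0)
  split_ifs with ht
  · rw [abs_div, abs_of_pos (hε.trans (hKε t ht))]
    exact div_le_div₀ hB (hφB t) hε (hKε t ht).le
  · simpa using div_nonneg hB hε.le

theorem ite_div_mul_cancel {φ K : ℝ → ℝ} {τ : ℝ} (hK : ∀ t ≤ τ, K t ≠ 0)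
    (t : ℝ) :
    (if t ≤ τ then φ t / K t else 0) * K t = if t ≤ τ then φ t else 0 := by
  split_ifs with ht
  · exact div_mul_cancel₀ _ (hK t ht)
  · exact zero_mul _

/-- IPCW identity, working conditionally on X: if the survival time T and the
censoring time C are independent (conditionally on X), K_C(t) = P(C > t) > ε > 0
for t ≤ τ, C is continuous (P(C ≥ t) = P(C > t)), and φ is bounded measurable,
then E[ Δ I(T̃ ≤ τ) φ(T) / K_C(T̃) ] = E[ I(T ≤ τ) φ(T) ],
where T̃ = min(T, C), Δ = I(T ≤ C). -/
theorem stmt_13 {Ω : Type*} [MeasurableSpace Ω] (μ : Measure Ω) [IsProbabilityMeasure μ]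
    (T C : Ω → ℝ) (hT : Measurable T) (hC : Measurable C)
    (hindep : IndepFun T C μ)
    (K : ℝ → ℝ) (hK : ∀ t, K t = (μ {ω | t < C ω}).toReal)
    (τ ε : ℝ) (hε : 0 < ε) (hKε : ∀ t ≤ τ, ε < K t)
    (hCcont : ∀ t : ℝ, μ {ω | C ω = t} = 0)
    (φ : ℝ → ℝ) (hφm : Measurable φ) (B : ℝ) (hφB : ∀ x, |φ x| ≤ B) :
    ∫ ω, (if T ω ≤ C ω ∧ min (T ω) (C ω) ≤ τ
            then φ (T ω) / K (min (T ω) (C ω)) else 0) ∂μ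
      = ∫ ω, (if T ω ≤ τ then φ (T ω) else 0) ∂μ := by
  have hK_meas : Measurable K := by
    rw [funext hK]
    exact antitone_measureReal_lt.measurable
  set w : ℝ → ℝ := fun t ↦ if t ≤ τ then φ t / K t else 0
  have hw_meas : Measurable w :=
    (hφm.div hK_meas).ite (measurableSet_le measurable_id measurable_const) measurable_const
  calc ∫ ω, (if T ω ≤ C ω ∧ min (T ω) (C ω) ≤ τ
            then φ (T ω) / K (min (T ω) (C ω)) else 0) ∂μ
      = ∫ ω, (if T ω ≤ C ω then w (T ω) else 0) ∂μ := by
        congr with ω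
        by_cases h : T ω ≤ C ω <;> simp [w, h]
    _ = ∫ ω, w (T ω) * μ.real {ω' | T ω ≤ C ω'} ∂μ :=
        hindep.integral_ite_le_eq_integral_mul_measureReal hT hC hw_meas
          (abs_ite_div_le hε hKε hφB)
    _ = ∫ ω, (if T ω ≤ τ then φ (T ω) else 0) ∂μ := by
        simp_rw [w, measureReal_le_eq_measureReal_lt (hCcont _), measureReal_def, ← hK,
          ite_div_mul_cancel fun t ht ↦ (hε.trans (hKε t ht)).ne']
end

section
/- Let (T1, Y1) and (T2, Y2) be i.i.d. and let C1, C2 be i.i.d. censoring times independent of all (T_j, Y_j), with continuous survival function G(t) = P(C > t) satisfying G(τ) > 0. With T̃_j = min(T_j, C_j) and Δ1 = I(T1 ≤ C1), the Uno-type IPCW identity holds: E[ Δ1 · I(T̃1 < T̃2) · I(T1 ≤ τ) · I(Y1 > Y2) / G(T̃1)² ] = P(T1 < T2, T1 ≤ τ, Y1 > Y2). -/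
/-!
Condition on the pairs `x = ((t₁, y₁), (t₂, y₂))`. On the event `t₁ ≤ C₁`, the observed time
`min t₁ C₁` is `t₁` and `t₁ < min t₂ C₂` splits into `t₁ < t₂` and `t₁ < C₂`; so for fixed `x` the
integrand is `1 / G(t₁)²` on the box `{C₁ ≥ t₁} × {C₂ > t₁}` when `x` is concordant and `0`
otherwise. Independence of the censoring times turns the box probability into
`P(C ≥ t₁) P(C > t₁)`, which is `G(t₁)²` because `C` has no atoms, and `G(t₁) ≥ G(τ) > 0`.
-/

open MeasureTheory ProbabilityTheory Set
open scoped ENNReal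

theorem ProbabilityTheory.IndepFun.lintegral_comp {Ω α β : Type*} [MeasurableSpace Ω]
    [MeasurableSpace α] [MeasurableSpace β] {μ : Measure Ω} [IsFiniteMeasure μ]
    {X : Ω → α} {Y : Ω → β} (hXY : IndepFun X Y μ) (hX : Measurable X) (hY : Measurable Y)
    {f : α → β → ℝ≥0∞} (hf : Measurable (Function.uncurry f)) :
    ∫⁻ ω, f (X ω) (Y ω) ∂μ = ∫⁻ x, ∫⁻ y, f x y ∂(μ.map Y) ∂(μ.map X) := by
  calc ∫⁻ ω, f (X ω) (Y ω) ∂μ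
      = ∫⁻ p, Function.uncurry f p ∂(μ.map fun ω => (X ω, Y ω)) :=
        (lintegral_map hf (hX.prodMk hY)).symm
    _ = _ := by
      rw [hXY.map_prod_eq_prod_map_map hX.aemeasurable hY.aemeasurable,
        lintegral_prod _ hf.aemeasurable]
      rfl

theorem nullSingletonClass_map {Ω α : Type*} [MeasurableSpace Ω] [MeasurableSpace α]
    [MeasurableSingletonClass α] {μ : Measure Ω} {X : Ω → α} (hX : Measurable X)
    (h : ∀ a, μ {ω | X ω = a} = 0) : NullSingletonClass (μ.map X) :=
  ⟨fun a => by rw [Measure.map_apply hX (measurableSet_singleton a)]; exact h a⟩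

theorem antitone_toReal_measure_Ioi {α : Type*} [MeasurableSpace α] [Preorder α]
    (ν : Measure α) [IsFiniteMeasure ν] : Antitone fun a => (ν (Ioi a)).toReal :=
  fun _ _ hab => ENNReal.toReal_mono (measure_ne_top _ _) (measure_mono (Ioi_subset_Ioi hab))

theorem prod_self_Ici_prod_Ioi (ν : Measure ℝ) [SFinite ν] [NullSingletonClass ν] (t : ℝ) :
    ν.prod ν (Ici t ×ˢ Ioi t) = ν (Ioi t) ^ 2 := by
  rw [Measure.prod_prod, measure_congr Ioi_ae_eq_Ici.symm, sq]

/-- The pairs `x = ((t₁, y₁), (t₂, y₂))` with `t₁ < t₂`, `t₁ ≤ τ` and `y₁ > y₂`. -/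
def concordantBefore (τ : ℝ) : Set ((ℝ × ℝ) × (ℝ × ℝ)) :=
  {x | x.1.1 < x.2.1 ∧ x.1.1 ≤ τ ∧ x.2.2 < x.1.2}

theorem measurableSet_concordantBefore (τ : ℝ) : MeasurableSet (concordantBefore τ) := by
  unfold concordantBefore
  measurability

noncomputable def ipcwWeight (G : ℝ → ℝ) (τ : ℝ) (x : (ℝ × ℝ) × (ℝ × ℝ)) (c : ℝ × ℝ) : ℝ :=
  if x.1.1 ≤ c.1 ∧ min x.1.1 c.1 < min x.2.1 c.2 ∧ x.1.1 ≤ τ ∧ x.2.2 < x.1.2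
  then 1 / G (min x.1.1 c.1) ^ 2 else 0

theorem ipcwWeight_nonneg (G : ℝ → ℝ) (τ : ℝ) (x : (ℝ × ℝ) × (ℝ × ℝ)) (c : ℝ × ℝ) :
    0 ≤ ipcwWeight G τ x c := by
  unfold ipcwWeight
  split_ifs <;> positivity

theorem measurable_ipcwWeight {G : ℝ → ℝ} (hG : Measurable G) (τ : ℝ) :
    Measurable (Function.uncurry (ipcwWeight G τ)) := by
  unfold ipcwWeight Function.uncurry
  refine Measurable.ite ?_ (by fun_prop) measurable_const
  measurability

theorem ipcwWeight_of_mem {G : ℝ → ℝ} {τ : ℝ} {x : (ℝ × ℝ) × (ℝ × ℝ)}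
    (hx : x ∈ concordantBefore τ) (c : ℝ × ℝ) :
    ipcwWeight G τ x c = (Ici x.1.1 ×ˢ Ioi x.1.1).indicator (fun _ => 1 / G x.1.1 ^ 2) c := by
  obtain ⟨h12, h1τ, hy⟩ := hx
  by_cases hc : x.1.1 ≤ c.1
  · simp [ipcwWeight, indicator_apply, hc, h12, h1τ, hy]
  · simp [ipcwWeight, hc]

theorem ipcwWeight_of_notMem {G : ℝ → ℝ} {τ : ℝ} {x : (ℝ × ℝ) × (ℝ × ℝ)}
    (hx : x ∉ concordantBefore τ) (c : ℝ × ℝ) : ipcwWeight G τ x c = 0 := by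
  refine if_neg fun ⟨hc, hlt, h1τ, hy⟩ => hx ⟨?_, h1τ, hy⟩
  rw [min_eq_left hc] at hlt
  exact (lt_min_iff.mp hlt).1

theorem lintegral_ipcwWeight {ν : Measure ℝ} [IsFiniteMeasure ν] [NullSingletonClass ν]
    {G : ℝ → ℝ} (hG : ∀ t, G t = (ν (Ioi t)).toReal) {τ : ℝ} (hGτ : 0 < G τ)
    (x : (ℝ × ℝ) × (ℝ × ℝ)) :
    ∫⁻ c, ENNReal.ofReal (ipcwWeight G τ x c) ∂(ν.prod ν) =
      (concordantBefore τ).indicator 1 x := by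
  by_cases hx : x ∈ concordantBefore τ
  · have hGpos : 0 < G x.1.1 := hGτ.trans_le <| by
      simpa only [hG] using antitone_toReal_measure_Ioi ν hx.2.1
    simp_rw [ipcwWeight_of_mem hx]
    rw [comp_indicator_const _ ENNReal.ofReal ENNReal.ofReal_zero,
      lintegral_indicator_const (measurableSet_Ici.prod measurableSet_Ioi),
      prod_self_Ici_prod_Ioi, ← ENNReal.ofReal_toReal (measure_ne_top ν (Ioi x.1.1)), ← hG,
      ← ENNReal.ofReal_pow hGpos.le, ← ENNReal.ofReal_mul (by positivity),
      one_div_mul_cancel (by positivity), ENNReal.ofReal_one, indicator_of_mem hx, Pi.one_apply]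
  · simp [ipcwWeight_of_notMem hx, hx]

theorem stmt_14_general {Ω : Type*} [MeasurableSpace Ω] (μ : Measure Ω) [IsProbabilityMeasure μ]
    (T1 Y1 T2 Y2 C1 C2 : Ω → ℝ)
    (hT1 : Measurable T1) (hY1 : Measurable Y1)
    (hT2 : Measurable T2) (hY2 : Measurable Y2)
    (hC1 : Measurable C1) (hC2 : Measurable C2)
    (hCindep : IndepFun (fun ω => ((T1 ω, Y1 ω), (T2 ω, Y2 ω)))
                        (fun ω => (C1 ω, C2 ω)) μ)
    (hC12indep : IndepFun C1 C2 μ)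
    (hC12id : μ.map C1 = μ.map C2)
    (hCcont : ∀ t : ℝ, μ {ω | C1 ω = t} = 0)
    (G : ℝ → ℝ) (hG : ∀ t, G t = (μ {ω | t < C1 ω}).toReal)
    (τ : ℝ) (hGτ : 0 < G τ) :
    ∫ ω, (if T1 ω ≤ C1 ω ∧ min (T1 ω) (C1 ω) < min (T2 ω) (C2 ω)
              ∧ T1 ω ≤ τ ∧ Y2 ω < Y1 ω
            then 1 / (G (min (T1 ω) (C1 ω))) ^ 2 else 0) ∂μ
      = (μ {ω | T1 ω < T2 ω ∧ T1 ω ≤ τ ∧ Y2 ω < Y1 ω}).toReal := by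
  have : NullSingletonClass (μ.map C1) := nullSingletonClass_map hC1 hCcont
  have hX : Measurable fun ω => ((T1 ω, Y1 ω), (T2 ω, Y2 ω)) :=
    (hT1.prodMk hY1).prodMk (hT2.prodMk hY2)
  have hC : Measurable fun ω => (C1 ω, C2 ω) := hC1.prodMk hC2
  have hCC : μ.map (fun ω => (C1 ω, C2 ω)) = (μ.map C1).prod (μ.map C1) := by
    rw [hC12indep.map_prod_eq_prod_map_map hC1.aemeasurable hC2.aemeasurable, hC12id]
  have hGν : ∀ t, G t = (μ.map C1 (Ioi t)).toReal := fun t => by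
    rw [hG, Measure.map_apply hC1 measurableSet_Ioi]
    rfl
  have hW : Measurable (Function.uncurry (ipcwWeight G τ)) := by
    refine measurable_ipcwWeight (Antitone.measurable ?_) τ
    simpa only [← hGν] using antitone_toReal_measure_Ioi (μ.map C1)
  change ∫ ω, ipcwWeight G τ ((T1 ω, Y1 ω), (T2 ω, Y2 ω)) (C1 ω, C2 ω) ∂μ = _
  rw [integral_eq_lintegral_of_nonneg_ae (.of_forall fun _ => ipcwWeight_nonneg ..)
    (hW.comp (hX.prodMk hC)).aestronglyMeasurable]
  dsimp only
  rw [hCindep.lintegral_comp (f := fun x c => ENNReal.ofReal (ipcwWeight G τ x c)) hX hC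
    (ENNReal.measurable_ofReal.comp hW), hCC]
  simp_rw [lintegral_ipcwWeight hGν hGτ]
  rw [lintegral_indicator_one (measurableSet_concordantBefore τ),
    Measure.map_apply hX (measurableSet_concordantBefore τ)]
  rfl

/-- Uno-type IPCW identity: for i.i.d. pairs (T1,Y1), (T2,Y2) and i.i.d. continuous
censoring times C1, C2 independent of the pairs, with G(t) = P(C > t), G(τ) > 0,
T̃_j = min(T_j, C_j), Δ1 = I(T1 ≤ C1):
E[ Δ1 I(T̃1 < T̃2) I(T1 ≤ τ) I(Y1 > Y2) / G(T̃1)² ] = P(T1 < T2, T1 ≤ τ, Y1 > Y2). -/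
theorem stmt_14 {Ω : Type*} [MeasurableSpace Ω] (μ : Measure Ω) [IsProbabilityMeasure μ]
    (T1 Y1 T2 Y2 C1 C2 : Ω → ℝ)
    (hT1 : Measurable T1) (hY1 : Measurable Y1)
    (hT2 : Measurable T2) (hY2 : Measurable Y2)
    (hC1 : Measurable C1) (hC2 : Measurable C2)
    (hpairindep : IndepFun (fun ω => (T1 ω, Y1 ω)) (fun ω => (T2 ω, Y2 ω)) μ)
    (hpairid : μ.map (fun ω => (T1 ω, Y1 ω)) = μ.map (fun ω => (T2 ω, Y2 ω)))
    (hCindep : IndepFun (fun ω => ((T1 ω, Y1 ω), (T2 ω, Y2 ω)))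
                        (fun ω => (C1 ω, C2 ω)) μ)
    (hC12indep : IndepFun C1 C2 μ)
    (hC12id : μ.map C1 = μ.map C2)
    (hCcont : ∀ t : ℝ, μ {ω | C1 ω = t} = 0)
    (hTcont : ∀ t : ℝ, μ {ω | T1 ω = t} = 0)
    (G : ℝ → ℝ) (hG : ∀ t, G t = (μ {ω | t < C1 ω}).toReal)
    (τ : ℝ) (hτ : 0 < τ) (hGτ : 0 < G τ) :
    ∫ ω, (if T1 ω ≤ C1 ω ∧ min (T1 ω) (C1 ω) < min (T2 ω) (C2 ω)
              ∧ T1 ω ≤ τ ∧ Y2 ω < Y1 ω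
            then 1 / (G (min (T1 ω) (C1 ω))) ^ 2 else 0) ∂μ
      = (μ {ω | T1 ω < T2 ω ∧ T1 ω ≤ τ ∧ Y2 ω < Y1 ω}).toReal :=
  stmt_14_general μ T1 Y1 T2 Y2 C1 C2 hT1 hY1 hT2 hY2 hC1 hC2 hCindep hC12indep hC12id hCcont G hG τ
    hGτ
end
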